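/- Let (R, α) be a Hom-Lie conformal superalgebra and (ρ, M, β) a representation of R. Then the direct sum R ⊕ M, with ∂(a + u) = ∂a + ∂u, λ-bracket [(a+u)_λ (b+v)]_M = [a_λ b] + ρ(a)_λ v − (−1)^{|a||b|} ρ(b)_{−∂−λ} u for a, b ∈ R and u, v ∈ M, and twist map (α+β)(a+u) = α(a) + β(u), is a Hom-Lie conformal superalgebra. -/

import Mathlib

noncomputable section

namespace HLCS

open scoped BigOperators

/-- Evaluation at `l : ℂ` of a polynomial (in `λ`) with coefficients in `M`,
encoded as a finitely supported family of coefficients. -/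
def pev {M : Type} [AddCommGroup M] [Module ℂ M] (l : ℂ) (p : ℕ →₀ M) : M :=
  p.sum fun n r => l ^ n • r

/-- Evaluation of a polynomial with coefficients in `M` at an operator `T`
(used for substitutions such as `-λ - ∂`). -/
def pevOp {M : Type} [AddCommGroup M] [Module ℂ M] (T : Module.End ℂ M) (p : ℕ →₀ M) : M :=
  p.sum fun n r => (T ^ n) r

/-- The super sign `(-1)^{|a||b|}` attached to parities `i`, `j`. -/
def sg (i j : ZMod 2) : ℂ := (-1 : ℂ) ^ (i * j).val

/-- The data of a `ℤ₂`-graded `ℂ[∂]`-module `R` with an endomorphism `α` and a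
`ℂ`-bilinear `λ`-bracket with values in `ℂ[λ] ⊗ R` (encoded by its coefficients). -/
structure Data (R : Type) [AddCommGroup R] [Module ℂ R] where
  der : Module.End ℂ R
  alpha : Module.End ℂ R
  G : ZMod 2 → Submodule ℂ R
  br : R →ₗ[ℂ] R →ₗ[ℂ] (ℕ →₀ R)

namespace Data

variable {R : Type} [AddCommGroup R] [Module ℂ R] (S : Data R)

/-- `[a_λ b]` evaluated at `λ = l`. -/
def lb (l : ℂ) (a b : R) : R := pev l (S.br a b)

/-- `[a_{-l-∂} b]` : the bracket with `-l - ∂` substituted for `λ`. -/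
def lbOp (l : ℂ) (a b : R) : R :=
  pevOp ((-l) • (1 : Module.End ℂ R) - S.der) (S.br a b)

/-- Multiplicativity: `α [a_λ b] = [α(a)_λ α(b)]`. -/
def Mult : Prop := ∀ (l : ℂ) (a b : R), S.alpha (S.lb l a b) = S.lb l (S.alpha a) (S.alpha b)

end Data

variable {R : Type} [AddCommGroup R] [Module ℂ R]

/-- `(R, α)` with the given data is a Hom-Lie conformal superalgebra.
All polynomial identities in `λ, μ` are stated by evaluating at arbitrary
complex numbers (which is equivalent, `ℂ` being infinite). -/
structure IsHLCS (S : Data R) : Prop where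
  internal : DirectSum.IsInternal S.G
  der_even : ∀ i, ∀ a ∈ S.G i, S.der a ∈ S.G i
  alpha_even : ∀ i, ∀ a ∈ S.G i, S.alpha a ∈ S.G i
  alpha_der : ∀ a, S.alpha (S.der a) = S.der (S.alpha a)
  br_grade : ∀ i j, ∀ a ∈ S.G i, ∀ b ∈ S.G j, ∀ n, S.br a b n ∈ S.G (i + j)
  conf_left : ∀ (l : ℂ) (a b : R), S.lb l (S.der a) b = -l • S.lb l a b
  conf_right : ∀ (l : ℂ) (a b : R), S.lb l a (S.der b) = S.der (S.lb l a b) + l • S.lb l a b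
  skew : ∀ i j, ∀ a ∈ S.G i, ∀ b ∈ S.G j, ∀ l : ℂ,
    S.lb l a b = (-sg i j) • S.lbOp l b a
  jacobi : ∀ i j, ∀ a ∈ S.G i, ∀ b ∈ S.G j, ∀ (c : R) (l m : ℂ),
    S.lb l (S.alpha a) (S.lb m b c) =
      S.lb (l + m) (S.lb l a b) (S.alpha c) + sg i j • S.lb m (S.alpha b) (S.lb l a c)

end HLCS
namespace HLCS

variable {R M : Type} [AddCommGroup R] [Module ℂ R] [AddCommGroup M] [Module ℂ M]

/-- The data of a conformal module `(M, β)` over `R`: a `ℤ₂`-graded `ℂ[∂]`-module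
together with a map `ρ` sending `a ∈ R` to a conformal linear map on `M`
(encoded via its `λ`-coefficients). -/
structure RepData (R M : Type) [AddCommGroup R] [Module ℂ R]
    [AddCommGroup M] [Module ℂ M] where
  derM : Module.End ℂ M
  beta : Module.End ℂ M
  GM : ZMod 2 → Submodule ℂ M
  rho : R →ₗ[ℂ] M →ₗ[ℂ] (ℕ →₀ M)

namespace RepData

variable (P : RepData R M)

/-- `ρ(a)_λ m` evaluated at `λ = l`. -/
def ev (l : ℂ) (a : R) (m : M) : M := pev l (P.rho a m)

/-- `ρ(a)_{-l-∂} m`. -/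
def evOp (l : ℂ) (a : R) (m : M) : M :=
  pevOp ((-l) • (1 : Module.End ℂ M) - P.derM) (P.rho a m)

end RepData

/-- `(ρ, M, β)` is a representation of the Hom-Lie conformal superalgebra `(R, α)`. -/
structure IsRep (S : Data R) (P : RepData R M) : Prop where
  internal : DirectSum.IsInternal P.GM
  derM_even : ∀ i, ∀ m ∈ P.GM i, P.derM m ∈ P.GM i
  beta_even : ∀ i, ∀ m ∈ P.GM i, P.beta m ∈ P.GM i
  beta_derM : ∀ m, P.beta (P.derM m) = P.derM (P.beta m)
  rho_grade : ∀ i j, ∀ a ∈ S.G i, ∀ m ∈ P.GM j, ∀ n, P.rho a m n ∈ P.GM (i + j)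
  conf_left : ∀ (l : ℂ) (a : R) (m : M), P.ev l (S.der a) m = -l • P.ev l a m
  conf_right : ∀ (l : ℂ) (a : R) (m : M),
    P.ev l a (P.derM m) = P.derM (P.ev l a m) + l • P.ev l a m
  beta_comm : ∀ (l : ℂ) (a : R) (m : M), P.ev l a (P.beta m) = P.beta (P.ev l a m)
  module_axiom : ∀ i j, ∀ a ∈ S.G i, ∀ b ∈ S.G j, ∀ (u : M) (l m : ℂ),
    P.ev (l + m) (S.lb l a b) (P.beta u) =
      P.ev l (S.alpha a) (P.ev m b u) - sg i j • P.ev m (S.alpha b) (P.ev l a u)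

end HLCS
namespace HLCS

/-!
Because of the sign `(-1)^{|u||b|}`, the bracket on `R × M` is defined on homogeneous elements by
the displayed formula and extended bilinearly through the parity projections. Every axiom of a
Hom-Lie conformal superalgebra is linear in each argument it quantifies over without a parity, so
it suffices to check it on homogeneous elements. There the `R`-component of each axiom is the same
axiom for `R`, and the `M`-component follows from the representation axioms, the module axiom
being used also with the operator `-μ-∂` in place of `μ`. That substitution is legitimate because
an identity between polynomials in `μ` that holds for every `μ ∈ ℂ` holds coefficientwise.
-/

section Evaluation

variable {N N' : Type} [AddCommGroup N] [Module ℂ N] [AddCommGroup N'] [Module ℂ N']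

def pevₗ (l : ℂ) : (ℕ →₀ N) →ₗ[ℂ] N := Finsupp.lsum ℂ fun n => l ^ n • LinearMap.id

def pevOpₗ (T : Module.End ℂ N) : (ℕ →₀ N) →ₗ[ℂ] N := Finsupp.lsum ℂ fun n => T ^ n

theorem pevOp_eq_pevOpₗ (T : Module.End ℂ N) (p : ℕ →₀ N) : pevOp T p = pevOpₗ T p := rfl

@[simp] theorem pev_single (l : ℂ) (n : ℕ) (r : N) : pev l (Finsupp.single n r) = l ^ n • r := by
  simp [pev, Finsupp.sum_single_index]

@[simp] theorem pevOp_single (T : Module.End ℂ N) (n : ℕ) (r : N) :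
    pevOp T (Finsupp.single n r) = (T ^ n) r := by
  simp [pevOp, Finsupp.sum_single_index]

@[simp] theorem pev_zero (l : ℂ) : pev l (0 : ℕ →₀ N) = 0 := map_zero (pevₗ l)

@[simp] theorem pev_add (l : ℂ) (p q : ℕ →₀ N) : pev l (p + q) = pev l p + pev l q :=
  map_add (pevₗ l) p q

@[simp] theorem pev_sub (l : ℂ) (p q : ℕ →₀ N) : pev l (p - q) = pev l p - pev l q :=
  map_sub (pevₗ l) p q

@[simp] theorem pev_neg (l : ℂ) (p : ℕ →₀ N) : pev l (-p) = -pev l p :=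
  map_neg (pevₗ l) p

@[simp] theorem pev_smul (l c : ℂ) (p : ℕ →₀ N) : pev l (c • p) = c • pev l p :=
  map_smul (pevₗ l) c p

@[simp] theorem pevOp_zero (T : Module.End ℂ N) : pevOp T (0 : ℕ →₀ N) = 0 := map_zero (pevOpₗ T)

@[simp] theorem pevOp_add (T : Module.End ℂ N) (p q : ℕ →₀ N) :
    pevOp T (p + q) = pevOp T p + pevOp T q :=
  map_add (pevOpₗ T) p q

@[simp] theorem pevOp_sub (T : Module.End ℂ N) (p q : ℕ →₀ N) :
    pevOp T (p - q) = pevOp T p - pevOp T q :=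
  map_sub (pevOpₗ T) p q

@[simp] theorem pevOp_neg (T : Module.End ℂ N) (p : ℕ →₀ N) : pevOp T (-p) = -pevOp T p :=
  map_neg (pevOpₗ T) p

@[simp] theorem pevOp_smul (T : Module.End ℂ N) (c : ℂ) (p : ℕ →₀ N) :
    pevOp T (c • p) = c • pevOp T p :=
  map_smul (pevOpₗ T) c p

theorem pev_eq_pevOp (l : ℂ) (p : ℕ →₀ N) : pev l p = pevOp (l • 1) p := by
  induction p using Finsupp.induction_linear with
  | zero => simp
  | add p q hp hq => simp [hp, hq]
  | single n r => simp [smul_pow]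

theorem pevOp_mapRange {F : N →ₗ[ℂ] N'} {T : Module.End ℂ N} {T' : Module.End ℂ N'}
    (h : F ∘ₗ T = T' ∘ₗ F) (p : ℕ →₀ N) :
    pevOp T' (Finsupp.mapRange.linearMap F p) = F (pevOp T p) := by
  have hpow (n : ℕ) : F ∘ₗ (T ^ n) = (T' ^ n) ∘ₗ F := by
    induction n with
    | zero => ext; simp
    | succ n ih =>
      rw [pow_succ, pow_succ, Module.End.mul_eq_comp, Module.End.mul_eq_comp,
        ← LinearMap.comp_assoc, ih, LinearMap.comp_assoc, h, ← LinearMap.comp_assoc]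
  induction p using Finsupp.induction_linear with
  | zero => simp
  | add p q hp hq => rw [map_add, pevOp_add, hp, hq, pevOp_add, map_add]
  | single n r => simpa using (LinearMap.congr_fun (hpow n) r).symm

theorem pev_mapRange (F : N →ₗ[ℂ] N') (l : ℂ) (p : ℕ →₀ N) :
    pev l (Finsupp.mapRange.linearMap F p) = F (pev l p) := by
  rw [pev_eq_pevOp, pev_eq_pevOp, pevOp_mapRange]
  ext; simp

theorem eval_ofFinsupp (f : ℕ →₀ ℂ) (l : ℂ) :
    (Polynomial.ofFinsupp (.ofCoeff f)).eval l = pev l f := by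
  rw [Polynomial.eval_eq_sum, Polynomial.sum_def, Polynomial.support_ofFinsupp, pev, Finsupp.sum]
  exact Finset.sum_congr rfl fun n _ => by rw [Polynomial.coeff_ofFinsupp, smul_eq_mul, mul_comm]

theorem pev_injective {p q : ℕ →₀ N} (h : ∀ l : ℂ, pev l p = pev l q) : p = q := by
  ext n
  rw [← sub_eq_zero, ← Module.forall_dual_apply_eq_zero_iff ℂ]
  intro φ
  have hφ : Finsupp.mapRange.linearMap φ p = Finsupp.mapRange.linearMap φ q :=
    AddMonoidAlgebra.ofCoeff_inj.mp <| Polynomial.ofFinsupp_inj.mp <| Polynomial.funext fun l => by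
      rw [eval_ofFinsupp, eval_ofFinsupp, pev_mapRange, pev_mapRange, h]
  simpa [sub_eq_zero] using DFunLike.congr_fun hφ n

theorem pev_mem {U : Submodule ℂ N} {p : ℕ →₀ N} (hp : ∀ n, p n ∈ U) (l : ℂ) : pev l p ∈ U :=
  Submodule.sum_mem _ fun n _ => U.smul_mem _ (hp n)

end Evaluation

section Substitution

variable {N : Type} [AddCommGroup N] [Module ℂ N]

def mulX : (ℕ →₀ N) →ₗ[ℂ] (ℕ →₀ N) := Finsupp.lmapDomain N ℂ (· + 1)

@[simp] theorem mulX_single (n : ℕ) (r : N) :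
    mulX (Finsupp.single n r) = Finsupp.single (n + 1) r := by
  simp [mulX]

theorem pevOp_mulX (T : Module.End ℂ N) (p : ℕ →₀ N) : pevOp T (mulX p) = T (pevOp T p) := by
  induction p using Finsupp.induction_linear with
  | zero => simp
  | add p q hp hq => rw [map_add, pevOp_add, hp, hq, pevOp_add, map_add]
  | single n r => rw [mulX_single, pevOp_single, pevOp_single, pow_succ', Module.End.mul_apply]

theorem pev_mulX (l : ℂ) (p : ℕ →₀ N) : pev l (mulX p) = l • pev l p := by
  rw [pev_eq_pevOp, pevOp_mulX, ← pev_eq_pevOp]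
  rfl

/-- `subst s A p` is `p(s λ + A)`, with `A` acting on the coefficients. -/
def subst (s : ℂ) (A : Module.End ℂ N) : (ℕ →₀ N) →ₗ[ℂ] (ℕ →₀ N) :=
  Finsupp.lsum ℂ fun n => ∑ k ∈ Finset.range (n + 1),
    Finsupp.lsingle k ∘ₗ ((n.choose k * s ^ k : ℂ) • A ^ (n - k))

theorem pevOp_subst {T A : Module.End ℂ N} (h : Commute T A) (s : ℂ) (p : ℕ →₀ N) :
    pevOp T (subst s A p) = pevOp (s • T + A) p := by
  induction p using Finsupp.induction_linear with
  | zero => simp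
  | add p q hp hq => rw [map_add, pevOp_add, hp, hq, pevOp_add]
  | single n r =>
    rw [pevOp_single, (h.smul_left s).add_pow, subst, Finsupp.lsum_single, LinearMap.sum_apply,
      pevOp_eq_pevOpₗ, map_sum, LinearMap.sum_apply]
    refine Finset.sum_congr rfl fun k _ => ?_
    simp [← pevOp_eq_pevOpₗ, smul_pow, Module.End.mul_apply, ← Nat.cast_smul_eq_nsmul ℂ,
      smul_smul, mul_comm]

theorem pev_subst (s l : ℂ) (A : Module.End ℂ N) (p : ℕ →₀ N) :
    pev l (subst s A p) = pevOp ((s * l) • 1 + A) p := by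
  rw [pev_eq_pevOp, pevOp_subst ((Commute.one_left A).smul_left l), smul_smul]

theorem subst_apply_mem {U : Submodule ℂ N} {A : Module.End ℂ N} (hA : ∀ x ∈ U, A x ∈ U)
    (s : ℂ) {p : ℕ →₀ N} (hp : ∀ n, p n ∈ U) (k : ℕ) : subst s A p k ∈ U := by
  rw [subst, Finsupp.lsum_apply, Finsupp.sum, Finsupp.finsetSum_apply]
  refine Submodule.sum_mem _ fun n _ => ?_
  rw [LinearMap.sum_apply, Finsupp.finsetSum_apply]
  refine Submodule.sum_mem _ fun j _ => ?_
  simp only [LinearMap.comp_apply, LinearMap.smul_apply, Finsupp.lsingle_apply,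
    Finsupp.single_apply]
  split_ifs
  · exact U.smul_mem _ (Module.End.pow_apply_mem_of_forall_mem _ hA _ (hp n))
  · exact U.zero_mem

theorem commute_smul_one_sub_self (c : ℂ) (D : Module.End ℂ N) : Commute (c • 1 - D) D :=
  ((Commute.one_left D).smul_left c).sub_left (Commute.refl D)

end Substitution

section Grading

theorem sg_comm (i j : ZMod 2) : sg i j = sg j i := by rw [sg, sg, mul_comm]

theorem sg_mul_self (i j : ZMod 2) : sg i j * sg i j = 1 := by
  rw [sg, ← pow_add, ← two_mul, pow_mul]; norm_num

theorem sg_add_left (i j k : ZMod 2) : sg (i + j) k = sg i k * sg j k := by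
  rw [sg, add_mul, ZMod.val_add, ← neg_one_pow_eq_pow_mod_two, pow_add, sg, sg]

theorem sg_add_right (i j k : ZMod 2) : sg i (j + k) = sg i j * sg i k := by
  rw [sg_comm, sg_add_left, sg_comm j, sg_comm k]

variable {ι κ N N' X : Type} [AddCommGroup N] [Module ℂ N] [AddCommGroup N'] [Module ℂ N']
  [AddCommGroup X] [Module ℂ X]

def gradedProj [DecidableEq ι] (ℳ : ι → Submodule ℂ N) [DirectSum.Decomposition ℳ] (i : ι) :
    N →ₗ[ℂ] N :=
  (ℳ i).subtype ∘ₗ DirectSum.component ℂ ι (fun i => ℳ i) i ∘ₗ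
    (DirectSum.decomposeLinearEquiv ℳ).toLinearMap

section Decomposition

variable [DecidableEq ι] {ℳ : ι → Submodule ℂ N} [DirectSum.Decomposition ℳ] {x : N} {i j : ι}

theorem gradedProj_of_mem_same (hx : x ∈ ℳ i) : gradedProj ℳ i x = x :=
  DirectSum.decompose_of_mem_same ℳ hx

theorem gradedProj_of_mem_ne (hx : x ∈ ℳ i) (hij : i ≠ j) : gradedProj ℳ j x = 0 :=
  DirectSum.decompose_of_mem_ne ℳ hx hij

end Decomposition

theorem ext_of_iSup_eq_top {A : ι → Submodule ℂ N} (hA : iSup A = ⊤) {f g : N →ₗ[ℂ] X}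
    (h : ∀ i, ∀ x ∈ A i, f x = g x) : f = g :=
  LinearMap.ext_on (s := ⋃ i, (A i : Set N)) (by rw [← Submodule.iSup_eq_span, hA]) fun x hx => by
    obtain ⟨i, hi⟩ := Set.mem_iUnion.mp hx
    exact h i x hi

theorem ext_of_iSup_eq_top₂ {A : ι → Submodule ℂ N} {B : κ → Submodule ℂ N'} (hA : iSup A = ⊤)
    (hB : iSup B = ⊤) {f g : N →ₗ[ℂ] N' →ₗ[ℂ] X}
    (h : ∀ i j, ∀ x ∈ A i, ∀ y ∈ B j, f x y = g x y) : f = g :=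
  ext_of_iSup_eq_top hA fun i x hx => ext_of_iSup_eq_top hB fun j y hy => h i j x hx y hy

theorem isCompl_prod {p p' : Submodule ℂ N} {q q' : Submodule ℂ N'} (hp : IsCompl p p')
    (hq : IsCompl q q') : IsCompl (p.prod q) (p'.prod q') :=
  .of_eq (by rw [Submodule.prod_inf_prod, hp.inf_eq_bot, hq.inf_eq_bot, Submodule.prod_bot])
    (by rw [Submodule.prod_sup_prod, hp.sup_eq_top, hq.sup_eq_top, Submodule.prod_top])

theorem isInternal_prod {A : ZMod 2 → Submodule ℂ N} {B : ZMod 2 → Submodule ℂ N'}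
    (hA : DirectSum.IsInternal A) (hB : DirectSum.IsInternal B) :
    DirectSum.IsInternal fun i => (A i).prod (B i) := by
  have huniv : (Set.univ : Set (ZMod 2)) = {0, 1} :=
    Set.ext fun i => by simpa using (by decide : ∀ i : ZMod 2, i = 0 ∨ i = 1) i
  rw [DirectSum.isInternal_submodule_iff_isCompl _ zero_ne_one huniv] at hA hB ⊢
  exact isCompl_prod hA hB

end Grading

variable {R M : Type} [AddCommGroup R] [Module ℂ R] [AddCommGroup M] [Module ℂ M]

namespace RepData

variable (P : RepData R M) (l : ℂ) (a : R)

@[simp] theorem ev_sub (x y : M) : P.ev l a (x - y) = P.ev l a x - P.ev l a y := by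
  simp [ev]

@[simp] theorem ev_smul (c : ℂ) (x : M) : P.ev l a (c • x) = c • P.ev l a x := by
  simp [ev]

@[simp] theorem evOp_sub (x y : M) : P.evOp l a (x - y) = P.evOp l a x - P.evOp l a y := by
  simp [evOp]

@[simp] theorem evOp_smul (c : ℂ) (x : M) : P.evOp l a (c • x) = c • P.evOp l a x := by
  simp [evOp]

end RepData

namespace IsRep

variable {S : Data R} {P : RepData R M} (hP : IsRep S P)
include hP

theorem rho_derM (a : R) (u : M) :
    P.rho a (P.derM u) = Finsupp.mapRange.linearMap P.derM (P.rho a u) + mulX (P.rho a u) :=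
  pev_injective fun l => by
    rw [pev_add, pev_mapRange, pev_mulX]
    exact hP.conf_right l a u

theorem rho_der (a : R) (u : M) : P.rho (S.der a) u = -mulX (P.rho a u) :=
  pev_injective fun l => by
    rw [pev_neg, pev_mulX, ← neg_smul]
    exact hP.conf_left l a u

theorem evOp_derM (l : ℂ) (b : R) (u : M) : P.evOp l b (P.derM u) = -l • P.evOp l b u := by
  unfold RepData.evOp
  rw [hP.rho_derM, pevOp_add, pevOp_mulX,
    pevOp_mapRange (commute_smul_one_sub_self (-l) P.derM).symm.eq]
  simp only [LinearMap.sub_apply, LinearMap.smul_apply, Module.End.one_apply]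
  abel

theorem evOp_der (l : ℂ) (b : R) (u : M) :
    P.evOp l (S.der b) u = l • P.evOp l b u + P.derM (P.evOp l b u) := by
  unfold RepData.evOp
  rw [hP.rho_der, pevOp_neg, pevOp_mulX]
  simp only [LinearMap.sub_apply, LinearMap.smul_apply, Module.End.one_apply]
  module

/-- Inside `ρ(c)_{-(λ+μ)-∂}` the operator `∂` acts as `-(λ+μ)` (by `evOp_derM`), so `-λ-∂` acts
as `μ`. -/
theorem evOp_add_pevOp (c : R) (q : ℕ →₀ M) (l m : ℂ) :
    P.evOp (l + m) c (pevOp ((-l) • 1 - P.derM) q) = P.evOp (l + m) c (pev m q) := by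
  let F : M →ₗ[ℂ] M := pevOpₗ ((-(l + m)) • 1 - P.derM) ∘ₗ P.rho c
  have hF : F ∘ₗ ((-l) • 1 - P.derM) = (m • 1) ∘ₗ F := by
    ext x
    have hx : F (P.derM x) = -(l + m) • F x := hP.evOp_derM (l + m) c x
    simp only [LinearMap.comp_apply, LinearMap.sub_apply, LinearMap.smul_apply,
      Module.End.one_apply, map_sub, map_smul, hx]
    module
  calc F (pevOp ((-l) • 1 - P.derM) q)
      = pevOp (m • 1) (Finsupp.mapRange.linearMap F q) := (pevOp_mapRange hF q).symm
    _ = F (pev m q) := by rw [← pev_eq_pevOp, pev_mapRange]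

/-- The module axiom with the operator `-μ-∂` substituted for `μ`. -/
theorem evOp_lb_beta {i j : ZMod 2} {a b : R} (ha : a ∈ S.G i) (hb : b ∈ S.G j) (u : M)
    (l m : ℂ) :
    P.evOp m (S.lb l a b) (P.beta u) =
      P.ev l (S.alpha a) (P.evOp m b u) - sg i j • P.evOp (l + m) (S.alpha b) (P.ev l a u) := by
  let F : M →ₗ[ℂ] M := pevₗ l ∘ₗ P.rho (S.alpha a)
  have hcoeff : subst 1 (l • 1) (P.rho (S.lb l a b) (P.beta u)) =
      Finsupp.mapRange.linearMap F (P.rho b u) - sg i j • P.rho (S.alpha b) (P.ev l a u) :=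
    pev_injective fun m => by
      rw [pev_subst, one_mul, ← add_smul, add_comm, ← pev_eq_pevOp, pev_sub, pev_smul,
        pev_mapRange]
      exact hP.module_axiom i j a ha b hb u l m
  have hF : F ∘ₗ ((-m) • 1 - P.derM) = ((-(l + m)) • 1 - P.derM) ∘ₗ F := by
    ext x
    have hx : F (P.derM x) = P.derM (F x) + l • F x := hP.conf_right l (S.alpha a) x
    simp only [LinearMap.comp_apply, LinearMap.sub_apply, LinearMap.smul_apply,
      Module.End.one_apply, map_sub, map_smul, hx]
    module
  have key := congrArg (pevOp ((-(l + m)) • 1 - P.derM)) hcoeff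
  rwa [pevOp_subst ((Commute.one_right _).smul_right l), pevOp_sub, pevOp_smul,
    pevOp_mapRange hF, one_smul, show (-(l + m)) • 1 - P.derM + l • 1 = (-m) • 1 - P.derM by
      module] at key

theorem jacobi_semidirect_snd {i j k : ZMod 2} {a b c : R} (ha : a ∈ S.G i) (hb : b ∈ S.G j)
    (hc : c ∈ S.G k) (u v w : M) (l m : ℂ) :
    P.ev l (S.alpha a) (P.ev m b w - sg j k • P.evOp m c v) -
        sg i (j + k) • P.evOp l (S.lb m b c) (P.beta u) =
      (P.ev (l + m) (S.lb l a b) (P.beta w) -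
          sg (i + j) k • P.evOp (l + m) (S.alpha c) (P.ev l a v - sg i j • P.evOp l b u)) +
        sg i j • (P.ev m (S.alpha b) (P.ev l a w - sg i k • P.evOp l c u) -
          sg j (i + k) • P.evOp m (S.lb l a c) (P.beta v)) := by
  have hbu : P.evOp (l + m) (S.alpha c) (P.evOp l b u) =
      P.evOp (l + m) (S.alpha c) (P.ev m b u) := hP.evOp_add_pevOp (S.alpha c) (P.rho b u) l m
  simp only [RepData.ev_sub, RepData.ev_smul, RepData.evOp_sub, RepData.evOp_smul]
  rw [hP.module_axiom i j a ha b hb w l m, hP.evOp_lb_beta ha hc v l m,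
    hP.evOp_lb_beta hb hc u m l, add_comm m l, hbu, sg_add_left, sg_add_right, sg_add_right,
    sg_comm j i]
  linear_combination (norm := module) (sg_mul_self i j) •
    (sg j k • P.ev l (S.alpha a) (P.evOp m c v) -
      (sg i k * sg j k) • P.evOp (l + m) (S.alpha c) (P.ev l a v))

end IsRep

def Data.lbₗ (S : Data R) (l : ℂ) : R →ₗ[ℂ] R →ₗ[ℂ] R := S.br.compr₂ (pevₗ l)

@[simp] theorem Data.lbₗ_apply (S : Data R) (l : ℂ) (a b : R) : S.lbₗ l a b = S.lb l a b := rfl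

theorem pevOp_prodMap (A : Module.End ℂ R) (B : Module.End ℂ M) (r : ℕ →₀ R) (s : ℕ →₀ M) :
    pevOp (LinearMap.prodMap A B)
        (Finsupp.mapRange.linearMap (LinearMap.inl ℂ R M) r +
          Finsupp.mapRange.linearMap (LinearMap.inr ℂ R M) s) = (pevOp A r, pevOp B s) := by
  have hinl : LinearMap.inl ℂ R M ∘ₗ A = LinearMap.prodMap A B ∘ₗ LinearMap.inl ℂ R M := by
    ext <;> simp
  have hinr : LinearMap.inr ℂ R M ∘ₗ B = LinearMap.prodMap A B ∘ₗ LinearMap.inr ℂ R M := by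
    ext <;> simp
  rw [pevOp_add, pevOp_mapRange hinl, pevOp_mapRange hinr]
  simp

theorem smul_one_sub_prodMap (c : ℂ) (A : Module.End ℂ R) (B : Module.End ℂ M) :
    c • 1 - LinearMap.prodMap A B = LinearMap.prodMap (c • 1 - A) (c • 1 - B) := by
  ext <;> simp

section Semidirect

variable (S : Data R) (P : RepData R M) [DirectSum.Decomposition S.G]
  [DirectSum.Decomposition P.GM]

/-- `(b, u) ↦ (-1)^{|u||b|} ρ(b)_{-λ-∂} u` on homogeneous elements, extended bilinearly. -/
def rhoSkew : R →ₗ[ℂ] M →ₗ[ℂ] (ℕ →₀ M) :=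
  ∑ p : ZMod 2, ∑ q : ZMod 2, sg p q •
    ((P.rho ∘ₗ gradedProj S.G q).compl₂ (gradedProj P.GM p)).compr₂ (subst (-1) (-P.derM))

def semidirect : Data (R × M) where
  der := LinearMap.prodMap S.der P.derM
  alpha := LinearMap.prodMap S.alpha P.beta
  G i := (S.G i).prod (P.GM i)
  br :=
    (S.br.compl₁₂ (LinearMap.fst ℂ R M) (LinearMap.fst ℂ R M)).compr₂
        (Finsupp.mapRange.linearMap (LinearMap.inl ℂ R M)) +
      (P.rho.compl₁₂ (LinearMap.fst ℂ R M) (LinearMap.snd ℂ R M) -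
        (rhoSkew S P).flip.compl₁₂ (LinearMap.snd ℂ R M) (LinearMap.fst ℂ R M)).compr₂
        (Finsupp.mapRange.linearMap (LinearMap.inr ℂ R M))

variable {S P}

theorem rhoSkew_of_mem {i j : ZMod 2} {b : R} {u : M} (hb : b ∈ S.G j) (hu : u ∈ P.GM i) :
    rhoSkew S P b u = sg i j • subst (-1) (-P.derM) (P.rho b u) := by
  simp only [rhoSkew, LinearMap.sum_apply, LinearMap.smul_apply, LinearMap.compr₂_apply,
    LinearMap.compl₂_apply, LinearMap.comp_apply]
  rw [Fintype.sum_eq_single i, Fintype.sum_eq_single j, gradedProj_of_mem_same hb,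
    gradedProj_of_mem_same hu]
  · intro q hq
    rw [gradedProj_of_mem_ne hb (Ne.symm hq), map_zero, LinearMap.zero_apply, map_zero, smul_zero]
  · intro p hp
    simp [gradedProj_of_mem_ne hu (Ne.symm hp)]

theorem semidirect_br (x y : R × M) :
    (semidirect S P).br x y =
      Finsupp.mapRange.linearMap (LinearMap.inl ℂ R M) (S.br x.1 y.1) +
        Finsupp.mapRange.linearMap (LinearMap.inr ℂ R M) (P.rho x.1 y.2 - rhoSkew S P y.1 x.2) := by
  simp [semidirect]

theorem semidirect_lb (l : ℂ) (x y : R × M) :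
    (semidirect S P).lb l x y = (S.lb l x.1 y.1, P.ev l x.1 y.2 - pev l (rhoSkew S P y.1 x.2)) := by
  rw [Data.lb, semidirect_br, pev_add, pev_mapRange, pev_mapRange, pev_sub]
  simp [Data.lb, RepData.ev]

theorem semidirect_lb_of_mem {i j : ZMod 2} {x y : R × M} (hx : x ∈ (semidirect S P).G i)
    (hy : y ∈ (semidirect S P).G j) (l : ℂ) :
    (semidirect S P).lb l x y = (S.lb l x.1 y.1, P.ev l x.1 y.2 - sg i j • P.evOp l y.1 x.2) := by
  rw [semidirect_lb, rhoSkew_of_mem hy.1 hx.2, pev_smul, pev_subst,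
    show (-1 * l) • 1 + -P.derM = (-l) • 1 - P.derM by module]
  rfl

theorem semidirect_lbOp_of_mem {i j : ZMod 2} {x y : R × M} (hx : x ∈ (semidirect S P).G i)
    (hy : y ∈ (semidirect S P).G j) (l : ℂ) :
    (semidirect S P).lbOp l y x =
      (S.lbOp l y.1 x.1, P.evOp l y.1 x.2 - sg j i • P.ev l x.1 y.2) := by
  rw [Data.lbOp, semidirect_br, show (semidirect S P).der = LinearMap.prodMap S.der P.derM from rfl,
    smul_one_sub_prodMap, pevOp_prodMap, pevOp_sub, rhoSkew_of_mem hx.1 hy.2, pevOp_smul,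
    pevOp_subst (commute_smul_one_sub_self (-l) P.derM).neg_right,
    show (-1 : ℂ) • ((-l) • 1 - P.derM) + -P.derM = l • 1 by module, ← pev_eq_pevOp]
  rfl

theorem semidirect_skew (hS : IsHLCS S) {i j : ZMod 2} {x y : R × M}
    (hx : x ∈ (semidirect S P).G i) (hy : y ∈ (semidirect S P).G j) (l : ℂ) :
    (semidirect S P).lb l x y = (-sg i j) • (semidirect S P).lbOp l y x := by
  rw [semidirect_lb_of_mem hx hy, semidirect_lbOp_of_mem hx hy, hS.skew i j _ hx.1 _ hy.1 l,
    sg_comm j i, Prod.smul_mk]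
  congr 1
  linear_combination (norm := module) -(sg_mul_self i j • P.ev l x.1 y.2)

variable (hS : IsHLCS S) (hP : IsRep S P)
include hS hP

theorem semidirect_isInternal : DirectSum.IsInternal (semidirect S P).G :=
  isInternal_prod hS.internal hP.internal

theorem semidirect_der_mem {i : ZMod 2} {x : R × M} (hx : x ∈ (semidirect S P).G i) :
    (semidirect S P).der x ∈ (semidirect S P).G i :=
  ⟨hS.der_even i x.1 hx.1, hP.derM_even i x.2 hx.2⟩

theorem semidirect_alpha_mem {i : ZMod 2} {x : R × M} (hx : x ∈ (semidirect S P).G i) :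
    (semidirect S P).alpha x ∈ (semidirect S P).G i :=
  ⟨hS.alpha_even i x.1 hx.1, hP.beta_even i x.2 hx.2⟩

theorem semidirect_br_mem {i j : ZMod 2} {x y : R × M} (hx : x ∈ (semidirect S P).G i)
    (hy : y ∈ (semidirect S P).G j) (n : ℕ) :
    (semidirect S P).br x y n ∈ (semidirect S P).G (i + j) := by
  rw [semidirect_br, rhoSkew_of_mem hy.1 hx.2]
  refine ⟨by simpa using hS.br_grade i j x.1 hx.1 y.1 hy.1 n, ?_⟩
  simp only [Finsupp.coe_add, Pi.add_apply, Finsupp.mapRange.linearMap_apply,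
    Finsupp.mapRange_apply, LinearMap.inl_apply, LinearMap.inr_apply, Prod.snd_add, zero_add,
    Finsupp.coe_sub, Finsupp.coe_smul, Pi.sub_apply, Pi.smul_apply]
  refine sub_mem (hP.rho_grade i j x.1 hx.1 y.2 hy.2 n) (Submodule.smul_mem _ _ ?_)
  refine subst_apply_mem (fun m hm => neg_mem (hP.derM_even _ m hm)) _ (fun k => ?_) n
  rw [add_comm]
  exact hP.rho_grade j i y.1 hy.1 x.2 hx.2 k

theorem semidirect_lb_mem {i j : ZMod 2} {x y : R × M} (hx : x ∈ (semidirect S P).G i)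
    (hy : y ∈ (semidirect S P).G j) (l : ℂ) :
    (semidirect S P).lb l x y ∈ (semidirect S P).G (i + j) :=
  pev_mem (semidirect_br_mem hS hP hx hy) l

theorem semidirect_conf_left (l : ℂ) (x y : R × M) :
    (semidirect S P).lb l ((semidirect S P).der x) y = -l • (semidirect S P).lb l x y := by
  have hT := (semidirect_isInternal hS hP).submodule_iSup_eq_top
  refine LinearMap.congr_fun₂ (ext_of_iSup_eq_top₂ hT hT (f := (semidirect S P).lbₗ l ∘ₗ
    (semidirect S P).der) (g := -l • (semidirect S P).lbₗ l) fun i j x hx y hy => ?_) x y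
  simp only [LinearMap.comp_apply, LinearMap.smul_apply, Data.lbₗ_apply]
  rw [semidirect_lb_of_mem (semidirect_der_mem hS hP hx) hy, semidirect_lb_of_mem hx hy]
  change (S.lb l (S.der x.1) y.1, P.ev l (S.der x.1) y.2 - sg i j • P.evOp l y.1 (P.derM x.2)) = _
  rw [hS.conf_left, hP.conf_left, hP.evOp_derM, Prod.smul_mk]
  congr 1
  module

theorem semidirect_conf_right (l : ℂ) (x y : R × M) :
    (semidirect S P).lb l x ((semidirect S P).der y) =
      (semidirect S P).der ((semidirect S P).lb l x y) + l • (semidirect S P).lb l x y := by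
  have hT := (semidirect_isInternal hS hP).submodule_iSup_eq_top
  refine LinearMap.congr_fun₂ (ext_of_iSup_eq_top₂ hT hT (f := ((semidirect S P).lbₗ l).compl₂
    (semidirect S P).der) (g := ((semidirect S P).lbₗ l).compr₂ (semidirect S P).der +
      l • (semidirect S P).lbₗ l) fun i j x hx y hy => ?_) x y
  simp only [LinearMap.compl₂_apply, LinearMap.add_apply, LinearMap.compr₂_apply,
    LinearMap.smul_apply, Data.lbₗ_apply]
  rw [semidirect_lb_of_mem hx (semidirect_der_mem hS hP hy), semidirect_lb_of_mem hx hy]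
  change (S.lb l x.1 (S.der y.1), P.ev l x.1 (P.derM y.2) - sg i j • P.evOp l (S.der y.1) x.2) =
    (S.der (S.lb l x.1 y.1), P.derM (P.ev l x.1 y.2 - sg i j • P.evOp l y.1 x.2)) + _
  rw [hS.conf_right, hP.conf_right, hP.evOp_der, Prod.smul_mk, Prod.mk_add_mk, map_sub,
    map_smul]
  congr 1
  module

theorem semidirect_jacobi_of_mem {i j k : ZMod 2} {x y z : R × M}
    (hx : x ∈ (semidirect S P).G i) (hy : y ∈ (semidirect S P).G j)
    (hz : z ∈ (semidirect S P).G k) (l m : ℂ) :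
    (semidirect S P).lb l ((semidirect S P).alpha x) ((semidirect S P).lb m y z) =
      (semidirect S P).lb (l + m) ((semidirect S P).lb l x y) ((semidirect S P).alpha z) +
        sg i j • (semidirect S P).lb m ((semidirect S P).alpha y) ((semidirect S P).lb l x z) := by
  rw [semidirect_lb_of_mem (semidirect_alpha_mem hS hP hx) (semidirect_lb_mem hS hP hy hz m),
    semidirect_lb_of_mem (semidirect_lb_mem hS hP hx hy l) (semidirect_alpha_mem hS hP hz),
    semidirect_lb_of_mem (semidirect_alpha_mem hS hP hy) (semidirect_lb_mem hS hP hx hz l),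
    semidirect_lb_of_mem hy hz, semidirect_lb_of_mem hx hy, semidirect_lb_of_mem hx hz]
  exact Prod.ext (hS.jacobi i j _ hx.1 _ hy.1 _ l m)
    (hP.jacobi_semidirect_snd hx.1 hy.1 hz.1 x.2 y.2 z.2 l m)

theorem semidirect_jacobi {i j : ZMod 2} {x y : R × M} (hx : x ∈ (semidirect S P).G i)
    (hy : y ∈ (semidirect S P).G j) (z : R × M) (l m : ℂ) :
    (semidirect S P).lb l ((semidirect S P).alpha x) ((semidirect S P).lb m y z) =
      (semidirect S P).lb (l + m) ((semidirect S P).lb l x y) ((semidirect S P).alpha z) +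
        sg i j • (semidirect S P).lb m ((semidirect S P).alpha y) ((semidirect S P).lb l x z) :=
  LinearMap.congr_fun (ext_of_iSup_eq_top (semidirect_isInternal hS hP).submodule_iSup_eq_top
    (f := (semidirect S P).lbₗ l ((semidirect S P).alpha x) ∘ₗ (semidirect S P).lbₗ m y)
    (g := (semidirect S P).lbₗ (l + m) ((semidirect S P).lb l x y) ∘ₗ (semidirect S P).alpha +
      sg i j • (semidirect S P).lbₗ m ((semidirect S P).alpha y) ∘ₗ (semidirect S P).lbₗ l x)
    fun _ _ hz => semidirect_jacobi_of_mem hS hP hx hy hz l m) z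

theorem isHLCS_semidirect : IsHLCS (semidirect S P) where
  internal := semidirect_isInternal hS hP
  der_even _ _ := semidirect_der_mem hS hP
  alpha_even _ _ := semidirect_alpha_mem hS hP
  alpha_der x := Prod.ext (hS.alpha_der x.1) (hP.beta_derM x.2)
  br_grade _ _ _ hx _ hy := semidirect_br_mem hS hP hx hy
  conf_left := semidirect_conf_left hS hP
  conf_right := semidirect_conf_right hS hP
  skew _ _ _ hx _ hy := semidirect_skew hS hx hy
  jacobi _ _ _ hx _ hy := semidirect_jacobi hS hP hx hy

end Semidirect

/-- If `(ρ, M, β)` is a representation of the Hom-Lie conformal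
superalgebra `(R, α)`, then `R ⊕ M`, with `∂(a + u) = ∂a + ∂u`, bracket
`[(a+u)_λ (b+v)] = [a_λ b] + ρ(a)_λ v - (-1)^{|a||b|} ρ(b)_{-∂-λ} u` and twist
`(α + β)(a + u) = α(a) + β(u)`, is a Hom-Lie conformal superalgebra. -/
theorem semidirect_homLie (S : Data R) (P : RepData R M)
    (hS : IsHLCS S) (hP : IsRep S P) :
    ∃ T : Data (R × M),
      T.der = LinearMap.prodMap (S.der : R →ₗ[ℂ] R) (P.derM : M →ₗ[ℂ] M) ∧
      T.alpha = LinearMap.prodMap (S.alpha : R →ₗ[ℂ] R) (P.beta : M →ₗ[ℂ] M) ∧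
      T.G = (fun i => (S.G i).prod (P.GM i)) ∧
      (∀ i j, ∀ a ∈ S.G i, ∀ u ∈ P.GM i, ∀ b ∈ S.G j, ∀ v ∈ P.GM j, ∀ l : ℂ,
        T.lb l (a, u) (b, v) =
          (S.lb l a b, P.ev l a v - sg i j • P.evOp l b u)) ∧
      IsHLCS T := by
  let _ := hS.internal.chooseDecomposition
  let _ := hP.internal.chooseDecomposition
  exact ⟨semidirect S P, rfl, rfl, rfl,
    fun _ _ _ ha _ hu _ hb _ hv l => semidirect_lb_of_mem ⟨ha, hu⟩ ⟨hb, hv⟩ l,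
    isHLCS_semidirect hS hP⟩

end HLCS
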